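/- Let G be the group with presentation ⟨a, b, c | abc = 1, a² = 1, b⁵ = 1, c¹⁰ = 1⟩. Then for every surjective group homomorphism φ from G onto the additive group ℤ/10ℤ, there exists a unit k ∈ (ℤ/10ℤ)ˣ such that (φ(a), φ(b), φ(c)) = (5k, 2k, 3k). In particular there are exactly four such homomorphisms, all equivalent up to an automorphism of ℤ/10ℤ. -/

import Mathlib

/-- Relations for `⟨a,b,c ∣ abc = 1, a² = 1, b⁵ = 1, c¹⁰ = 1⟩`, the orbifold
fundamental group of `S²(2,5,10)`.  Generators: `a = 0`, `b = 1`, `c = 2`. -/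
def relsS2510 : Set (FreeGroup (Fin 3)) :=
  {FreeGroup.of 0 * FreeGroup.of 1 * FreeGroup.of 2,
    (FreeGroup.of 0) ^ 2, (FreeGroup.of 1) ^ 5, (FreeGroup.of 2) ^ 10}

open PresentedGroup Multiplicative

private lemma psi_rels (u : ZMod 10) :
    ∀ r ∈ relsS2510,
      FreeGroup.lift (fun i => ofAdd (![5*u, 2*u, 3*u] i)) r = 1 := by
  rintro r (rfl | rfl | rfl | rfl) <;>
    simp only [map_mul, map_pow, FreeGroup.lift_apply_of, ← ofAdd_add, ← ofAdd_nsmul,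
      Matrix.cons_val_zero, Matrix.cons_val_one, Matrix.head_cons, Matrix.cons_val_two,
      Matrix.tail_cons] <;>
    rw [ofAdd_eq_one]
  · exact (by decide : ∀ v : ZMod 10, 5*v + 2*v + 3*v = 0) u
  · exact (by decide : ∀ v : ZMod 10, 2 • (5*v) = 0) u
  · exact (by decide : ∀ v : ZMod 10, 5 • (2*v) = 0) u
  · exact (by decide : ∀ v : ZMod 10, 10 • (3*v) = 0) u

/-- The homomorphism sending `(a,b,c)` to `(5u, 2u, 3u)`. -/
private def psi (u : ZMod 10) : PresentedGroup relsS2510 →* Multiplicative (ZMod 10) :=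
  PresentedGroup.toGroup (psi_rels u)

private lemma psi_of (u : ZMod 10) (i : Fin 3) :
    psi u (PresentedGroup.of i) = ofAdd (![5*u, 2*u, 3*u] i) :=
  PresentedGroup.toGroup.of _

/-- every value of a hom lies in a subgroup containing the images of generators -/
private lemma mem_of_gen {φ : PresentedGroup relsS2510 →* Multiplicative (ZMod 10)}
    (H : Subgroup (Multiplicative (ZMod 10)))
    (h : ∀ i : Fin 3, φ (PresentedGroup.of i) ∈ H) :
    ∀ g, φ g ∈ H := by
  intro g
  induction g with
  | H w =>
    induction w using FreeGroup.induction_on with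
    | C1 => simpa using H.one_mem
    | of i => exact h i
    | inv_of i _ => rw [map_inv, map_inv]; exact H.inv_mem (h i)
    | mul w₁ w₂ ih₁ ih₂ =>
      rw [show PresentedGroup.mk relsS2510 (w₁ * w₂)
            = PresentedGroup.mk relsS2510 w₁ * PresentedGroup.mk relsS2510 w₂ from map_mul _ _ _,
        map_mul]
      exact H.mul_mem ih₁ ih₂

private lemma surj_of_one {φ : PresentedGroup relsS2510 →* Multiplicative (ZMod 10)}
    (h : ∃ g, φ g = ofAdd 1) : Function.Surjective φ := by
  obtain ⟨g, hg⟩ := h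
  intro c
  refine ⟨g ^ (Multiplicative.toAdd c).val, ?_⟩
  rw [map_pow, hg, ← ofAdd_nsmul, nsmul_eq_mul, mul_one, ZMod.natCast_zmod_val, ofAdd_toAdd]

/-- classification of surjective homs -/
private lemma classify (φ : PresentedGroup relsS2510 →* Multiplicative (ZMod 10))
    (hs : Function.Surjective φ) :
    ∃ u : ZMod 10, u ∈ ({1, 3, 7, 9} : Set (ZMod 10)) ∧ φ = psi u := by
  have hrel : ∀ r ∈ relsS2510, φ (PresentedGroup.mk relsS2510 r) = 1 := by
    intro r hr
    have h1 : PresentedGroup.mk relsS2510 r = 1 :=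
      (QuotientGroup.eq_one_iff r).mpr (Subgroup.subset_normalClosure hr)
    rw [h1, map_one]
  set x := Multiplicative.toAdd (φ (PresentedGroup.of 0)) with hxdef
  set y := Multiplicative.toAdd (φ (PresentedGroup.of 1)) with hydef
  set z := Multiplicative.toAdd (φ (PresentedGroup.of 2)) with hzdef
  have e1 : x + y + z = 0 := by
    have h := hrel _ (Set.mem_insert _ _)
    rw [map_mul, map_mul] at h
    rw [map_mul, map_mul] at h
    have := congrArg Multiplicative.toAdd h
    rw [toAdd_mul, toAdd_mul, toAdd_one] at this
    exact this
  have e2 : x + x = 0 := by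
    have h := hrel _ (by right; left; rfl)
    rw [map_pow, map_pow] at h
    have h' : φ (PresentedGroup.of 0) ^ 2 = 1 := h
    have := congrArg Multiplicative.toAdd h'
    rw [toAdd_pow] at this
    rw [hxdef, ← two_nsmul]
    simpa using this
  have e3 : (5 : ℕ) • y = 0 := by
    have h := hrel _ (by right; right; left; rfl)
    rw [map_pow, map_pow] at h
    have h' : φ (PresentedGroup.of 1) ^ 5 = 1 := h
    have := congrArg Multiplicative.toAdd h'
    rw [toAdd_pow] at this
    rw [hydef]
    simpa using this
  -- from surjectivity, x ≠ 0 and y ≠ 0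
  have hymem : ∃ u : ZMod 10, y = 2 * u :=
    (by decide : ∀ a : ZMod 10, (5 : ℕ) • a = 0 → ∃ u, a = 2 * u) y e3
  have hx : x ≠ 0 := by
    rintro hx0
    -- all generators land in the "even" subgroup
    set H : Subgroup (Multiplicative (ZMod 10)) :=
      { carrier := {g | ∃ u : ZMod 10, Multiplicative.toAdd g = 2 * u}
        mul_mem' := by
          rintro g₁ g₂ ⟨u, hu⟩ ⟨v, hv⟩
          exact ⟨u + v, by rw [toAdd_mul, hu, hv]; ring⟩
        one_mem' := ⟨0, by simp⟩
        inv_mem' := by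
          rintro g ⟨u, hu⟩
          exact ⟨-u, by rw [toAdd_inv, hu]; ring⟩ } with hH
    have hgen : ∀ i : Fin 3, φ (PresentedGroup.of i) ∈ H := by
      obtain ⟨u, hu⟩ := hymem
      have hz : z = -(x + y) := by linear_combination e1
      have h0 : φ (PresentedGroup.of 0) ∈ H := ⟨0, by rw [← hxdef, hx0]; ring⟩
      have h1 : φ (PresentedGroup.of 1) ∈ H := ⟨u, by rw [← hydef, hu]⟩
      have h2 : φ (PresentedGroup.of 2) ∈ H :=
        ⟨-u, by rw [← hzdef, hz, hx0, hu]; ring⟩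
      intro i
      fin_cases i
      · exact h0
      · exact h1
      · exact h2
    obtain ⟨g, hg⟩ := hs (ofAdd 1)
    obtain ⟨u, hu⟩ := mem_of_gen H hgen g
    rw [hg] at hu
    exact absurd hu (by revert u; decide)
  have hy : y ≠ 0 := by
    rintro hy0
    set H : Subgroup (Multiplicative (ZMod 10)) :=
      { carrier := {g | ∃ u : ZMod 10, Multiplicative.toAdd g = 5 * u}
        mul_mem' := by
          rintro g₁ g₂ ⟨u, hu⟩ ⟨v, hv⟩
          exact ⟨u + v, by rw [toAdd_mul, hu, hv]; ring⟩
        one_mem' := ⟨0, by simp⟩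
        inv_mem' := by
          rintro g ⟨u, hu⟩
          exact ⟨-u, by rw [toAdd_inv, hu]; ring⟩ } with hH
    have hxval : x = 0 ∨ x = 5 := (by decide : ∀ a : ZMod 10, a + a = 0 → a = 0 ∨ a = 5) x e2
    have hgen : ∀ i : Fin 3, φ (PresentedGroup.of i) ∈ H := by
      have hz : z = -(x + y) := by linear_combination e1
      have h0 : φ (PresentedGroup.of 0) ∈ H := by
        rcases hxval with h | h
        · exact ⟨0, by rw [← hxdef, h]; ring⟩
        · exact ⟨1, by rw [← hxdef, h]; ring⟩
      have h1 : φ (PresentedGroup.of 1) ∈ H := ⟨0, by rw [← hydef, hy0]; ring⟩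
      have h2 : φ (PresentedGroup.of 2) ∈ H := by
        rcases hxval with h | h
        · exact ⟨0, by rw [← hzdef, hz, h, hy0]; ring⟩
        · exact ⟨1, by rw [← hzdef, hz, h, hy0]; decide⟩
      intro i
      fin_cases i
      · exact h0
      · exact h1
      · exact h2
    obtain ⟨g, hg⟩ := hs (ofAdd 1)
    obtain ⟨u, hu⟩ := mem_of_gen H hgen g
    rw [hg] at hu
    exact absurd hu (by revert u; decide)
  -- now pin down the values
  have hxval : x = 5 := by
    rcases (by decide : ∀ a : ZMod 10, a + a = 0 → a = 0 ∨ a = 5) x e2 with h | h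
    · exact absurd h hx
    · exact h
  have hyval : y = 2 ∨ y = 4 ∨ y = 6 ∨ y = 8 := by
    obtain ⟨u, hu⟩ := hymem
    rcases (by decide : ∀ a : ZMod 10, (5:ℕ) • a = 0 → a = 0 ∨ a = 2 ∨ a = 4 ∨ a = 6 ∨ a = 8) y e3
      with h | h
    · exact absurd h hy
    · exact h
  have hzval : z = -(x + y) := by linear_combination e1
  -- pick the unit
  have key : ∀ u : ZMod 10, x = 5 * u → y = 2 * u → z = 3 * u → φ = psi u := by
    intro u h0 h1 h2
    apply PresentedGroup.ext
    have g0 : φ (PresentedGroup.of 0) = psi u (PresentedGroup.of 0) := by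
      rw [psi_of]
      simp only [Matrix.cons_val_zero]
      rw [← h0, hxdef, ofAdd_toAdd]
    have g1 : φ (PresentedGroup.of 1) = psi u (PresentedGroup.of 1) := by
      rw [psi_of]
      simp only [Matrix.cons_val_one, Matrix.head_cons, Matrix.cons_val_zero]
      rw [← h1, hydef, ofAdd_toAdd]
    have g2 : φ (PresentedGroup.of 2) = psi u (PresentedGroup.of 2) := by
      rw [psi_of]
      simp only [Matrix.cons_val_two, Matrix.tail_cons, Matrix.head_cons]
      rw [← h2, hzdef, ofAdd_toAdd]
    intro i
    fin_cases i
    · exact g0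
    · exact g1
    · exact g2
  rcases hyval with h | h | h | h
  · exact ⟨1, by left; rfl, key 1 (by rw [hxval]; decide) (by rw [h]; decide)
      (by rw [hzval, hxval, h]; decide)⟩
  · exact ⟨7, by right; right; left; rfl, key 7 (by rw [hxval]; decide) (by rw [h]; decide)
      (by rw [hzval, hxval, h]; decide)⟩
  · exact ⟨3, by right; left; rfl, key 3 (by rw [hxval]; decide) (by rw [h]; decide)
      (by rw [hzval, hxval, h]; decide)⟩
  · exact ⟨9, by right; right; right; rfl, key 9 (by rw [hxval]; decide) (by rw [h]; decide)
      (by rw [hzval, hxval, h]; decide)⟩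

private lemma psi_surj (u : ZMod 10) (hu : u ∈ ({1, 3, 7, 9} : Set (ZMod 10))) :
    Function.Surjective (psi u) := by
  apply surj_of_one
  -- witness: a * b^t with 5u + t•(2u) = 1
  have gen : ∀ t : ℕ, 5*u + t • (2*u) = 1 →
      ∃ g, psi u g = ofAdd 1 := by
    intro t ht
    refine ⟨PresentedGroup.of 0 * (PresentedGroup.of 1) ^ t, ?_⟩
    rw [map_mul, map_pow, psi_of, psi_of]
    simp only [Matrix.cons_val_zero, Matrix.cons_val_one, Matrix.head_cons]
    rw [← ofAdd_nsmul, ← ofAdd_add, ht]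
  rcases hu with rfl | rfl | rfl | rfl
  · exact gen 3 (by decide)
  · exact gen 1 (by decide)
  · exact gen 4 (by decide)
  · exact gen 2 (by decide)

private lemma psi_ne {u v : ZMod 10} (h : 2 * u ≠ 2 * v) : psi u ≠ psi v := by
  intro hpsi
  have := congrArg (fun ψ : PresentedGroup relsS2510 →* Multiplicative (ZMod 10) =>
    ψ (PresentedGroup.of 1)) hpsi
  simp only [psi_of, Matrix.cons_val_one, Matrix.head_cons] at this
  exact h (by simpa using congrArg Multiplicative.toAdd this)

/-- For every surjective homomorphism `φ` from
`⟨a,b,c ∣ abc = 1, a² = 1, b⁵ = 1, c¹⁰ = 1⟩` onto `ℤ/10ℤ`, there is a unit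
`k` of `ℤ/10ℤ` with `(φ(a), φ(b), φ(c)) = (5k, 2k, 3k)`; and there are exactly
four such homomorphisms, all equivalent up to an automorphism of `ℤ/10ℤ`. -/
theorem hom_S2510_to_Z10 :
    (∀ φ : PresentedGroup relsS2510 →* Multiplicative (ZMod 10),
      Function.Surjective φ →
        ∃ k : (ZMod 10)ˣ,
          Multiplicative.toAdd (φ (PresentedGroup.of 0)) = 5 * (k : ZMod 10) ∧
          Multiplicative.toAdd (φ (PresentedGroup.of 1)) = 2 * (k : ZMod 10) ∧
          Multiplicative.toAdd (φ (PresentedGroup.of 2)) = 3 * (k : ZMod 10)) ∧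
    {φ : PresentedGroup relsS2510 →* Multiplicative (ZMod 10) |
        Function.Surjective φ}.ncard = 4 := by
  constructor
  · intro φ hs
    obtain ⟨u, hu, rfl⟩ := classify φ hs
    have hval : ∀ i : Fin 3,
        Multiplicative.toAdd (psi u (PresentedGroup.of i)) = ![5*u, 2*u, 3*u] i := by
      intro i; rw [psi_of, toAdd_ofAdd]
    rcases hu with rfl | rfl | rfl | rfl
    · exact ⟨1, by simpa using hval 0, by simpa using hval 1, by simpa using hval 2⟩
    · exact ⟨⟨3, 7, by decide, by decide⟩, by simpa using hval 0, by simpa using hval 1,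
        by simpa using hval 2⟩
    · exact ⟨⟨7, 3, by decide, by decide⟩, by simpa using hval 0, by simpa using hval 1,
        by simpa using hval 2⟩
    · exact ⟨⟨9, 9, by decide, by decide⟩, by simpa using hval 0, by simpa using hval 1,
        by simpa using hval 2⟩
  · have hset : {φ : PresentedGroup relsS2510 →* Multiplicative (ZMod 10) |
        Function.Surjective φ} = {psi 1, psi 3, psi 7, psi 9} := by
      ext φ
      constructor
      · intro hs
        obtain ⟨u, hu, rfl⟩ := classify φ hs
        rcases hu with rfl | rfl | rfl | rfl
        · exact Set.mem_insert _ _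
        · exact Or.inr (Set.mem_insert _ _)
        · exact Or.inr (Or.inr (Set.mem_insert _ _))
        · exact Or.inr (Or.inr (Or.inr rfl))
      · rintro (rfl | rfl | rfl | rfl)
        · exact psi_surj 1 (by left; rfl)
        · exact psi_surj 3 (by right; left; rfl)
        · exact psi_surj 7 (by right; right; left; rfl)
        · exact psi_surj 9 (by right; right; right; rfl)
    rw [hset]
    have d12 : psi (1 : ZMod 10) ≠ psi 3 := psi_ne (by decide)
    have d13 : psi (1 : ZMod 10) ≠ psi 7 := psi_ne (by decide)
    have d14 : psi (1 : ZMod 10) ≠ psi 9 := psi_ne (by decide)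
    have d23 : psi (3 : ZMod 10) ≠ psi 7 := psi_ne (by decide)
    have d24 : psi (3 : ZMod 10) ≠ psi 9 := psi_ne (by decide)
    have d34 : psi (7 : ZMod 10) ≠ psi 9 := psi_ne (by decide)
    rw [Set.ncard_insert_of_notMem (by simp [d12, d13, d14]),
      Set.ncard_insert_of_notMem (by simp [d23, d24]),
      Set.ncard_pair d34]
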